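/- arXiv:2605.30103 — 2 statements merged into one kernel-verified Lean document; each statement's English description precedes it below -/
import Mathlib

section
/- For s ≥ √3/π, the function ρ_S(s) = (6/π)·arcsin(√(s/(s+1))/2) satisfies ρ_S(s) ≥ 1 - (√3/π)·(1/s). -/
open Real Set

/-
Write `ρ_P = √(s/(s+1))`, so `ρ_P ≥ 1 - 1/(2s)`. On `[0, 1/2]` the derivative of `arcsin` is at
most `1/√(1 - 1/4) = 2/√3`, hence `arcsin (ρ_P/2) ≥ π/6 - (2/√3)(1/2 - ρ_P/2) ≥ π/6 - 1/(2√3 s)`,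
and multiplying by `6/π` gives `1 - (√3/π)/s`.
-/

namespace Real

theorem arcsin_sub_arcsin_le {a x y : ℝ} (ha : a < 1) (hx : -a ≤ x) (hxy : x ≤ y) (hy : y ≤ a) :
    arcsin y - arcsin x ≤ 1 / √(1 - a ^ 2) * (y - x) := by
  have hmem : ∀ t ∈ Icc (-a) a, t ^ 2 ≤ a ^ 2 := fun t ht => sq_le_sq' ht.1 ht.2
  refine (convex_Icc (-a) a).image_sub_le_mul_sub_of_deriv_le continuous_arcsin.continuousOn
    (differentiableOn_arcsin.mono ?_) ?_ x ⟨hx, hxy.trans hy⟩ y ⟨hx.trans hxy, hy⟩ hxy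
  · rw [interior_Icc]
    intro t ht
    simp only [mem_compl_iff, mem_insert_iff, mem_singleton_iff, not_or]
    constructor <;> nlinarith [hmem t (Ioo_subset_Icc_self ht)]
  · rw [interior_Icc, deriv_arcsin]
    intro t ht
    have ha2 : a ^ 2 < 1 := by nlinarith [hmem t (Ioo_subset_Icc_self ht)]
    exact one_div_le_one_div_of_le (sqrt_pos.2 (by linarith))
      (sqrt_le_sqrt (by linarith [hmem t (Ioo_subset_Icc_self ht)]))

theorem arcsin_one_half : arcsin (1 / 2) = π / 6 :=
  arcsin_eq_of_sin_eq sin_pi_div_six ⟨by linarith [pi_pos], by linarith [pi_pos]⟩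

theorem pi_div_six_sub_arcsin_le {y : ℝ} (hy₀ : 0 ≤ y) (hy : y ≤ 1 / 2) :
    π / 6 - arcsin y ≤ 2 / √3 * (1 / 2 - y) := by
  have h := arcsin_sub_arcsin_le (a := 1 / 2) (by norm_num) (by linarith) hy le_rfl
  have hsqrt : √(1 - (1 / 2 : ℝ) ^ 2) = √3 / 2 := by
    rw [show (1 : ℝ) - (1 / 2) ^ 2 = 3 / 2 ^ 2 by norm_num,
      sqrt_div' _ (by norm_num : (0 : ℝ) ≤ 2 ^ 2), sqrt_sq (by norm_num)]
  rwa [arcsin_one_half, hsqrt, one_div_div] at h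

end Real

theorem one_sub_inv_two_mul_le_sqrt_div_add_one {s : ℝ} (hs : 0 < s) :
    1 - 1 / (2 * s) ≤ √(s / (s + 1)) := by
  rcases le_or_gt (1 - 1 / (2 * s)) 0 with hneg | hpos
  · exact hneg.trans (sqrt_nonneg _)
  · have hs2 : 1 / 2 < s := by
      rw [sub_pos, div_lt_one (by positivity)] at hpos
      linarith
    rw [le_sqrt hpos.le (by positivity), one_sub_div (by positivity), div_pow,
      div_le_div_iff₀ (by positivity) (by positivity)]
    nlinarith

/-- Large-SNR bound: for `s ≥ √3/π`, the Spearman reliability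
`ρ_S(s) = (6/π)·arcsin(√(s/(s+1))/2)` satisfies `ρ_S(s) ≥ 1 - (√3/π)/s`. -/
theorem stmt15 (s : ℝ) (hs : Real.sqrt 3 / π ≤ s) :
    1 - (Real.sqrt 3 / π) * (1 / s) ≤
      (6 / π) * arcsin (Real.sqrt (s / (s + 1)) / 2) := by
  have hs₀ : 0 < s := lt_of_lt_of_le (by positivity) hs
  set ρ := √(s / (s + 1))
  have hρ₁ : ρ ≤ 1 :=
    (sqrt_le_left zero_le_one).2 (by rw [one_pow, div_le_one (by linarith)]; linarith)
  have hρ : 1 - 1 / (2 * s) ≤ ρ := one_sub_inv_two_mul_le_sqrt_div_add_one hs₀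
  have harcsin := pi_div_six_sub_arcsin_le (y := ρ / 2) (by positivity) (by linarith)
  have hsqrt3 : √3 ^ 2 = 3 := sq_sqrt (by norm_num)
  calc 1 - √3 / π * (1 / s)
      = 6 / π * (π / 6 - 2 / √3 * (1 / 2 - (1 - 1 / (2 * s)) / 2)) := by
        field_simp
        linear_combination -2 * hsqrt3
    _ ≤ 6 / π * (π / 6 - 2 / √3 * (1 / 2 - ρ / 2)) := by gcongr
    _ ≤ 6 / π * arcsin (ρ / 2) := by gcongr; linarith
end

section
/- Let (X,Y) be bivariate Normal with Pearson correlation ρ. Then the probability that two independent copies (X₁,Y₁), (X₂,Y₂) are concordant in a sign sense gives Kendall's identity: P(X₁ > X₂ and Y₁ > Y₂) = 1/4 + arcsin(ρ)/(2π); equivalently Kendall's τ = (2/π)·arcsin(ρ). -/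
open MeasureTheory ProbabilityTheory Real Set


noncomputable def gden (p : ℝ × ℝ) : ℝ := (2 * π)⁻¹ * Real.exp (-(p.1 ^ 2 + p.2 ^ 2) / 2)

lemma gden_nonneg (p : ℝ × ℝ) : 0 ≤ gden p := by
  unfold gden; positivity

lemma gden_eq (p : ℝ × ℝ) :
    ENNReal.ofReal (gden p) = gaussianPDF 0 1 p.1 * gaussianPDF 0 1 p.2 := by
  simp only [gaussianPDF]
  rw [← ENNReal.ofReal_mul (gaussianPDFReal_nonneg _ _ _)]
  congr 1
  unfold gden gaussianPDFReal
  have h2π : (0:ℝ) ≤ 2 * π := by positivity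
  push_cast
  rw [mul_one, mul_one]
  calc (2 * π)⁻¹ * rexp (-(p.1 ^ 2 + p.2 ^ 2) / 2)
      = ((√(2 * π))⁻¹ * (√(2 * π))⁻¹) * (rexp (-(p.1 - 0) ^ 2 / 2) * rexp (-(p.2 - 0) ^ 2 / 2)) := by
        rw [← mul_inv, Real.mul_self_sqrt h2π, ← Real.exp_add]
        ring_nf
    _ = _ := by ring



lemma prod_gauss_eq :
    (gaussianReal 0 1).prod (gaussianReal 0 1)
      = volume.withDensity (fun p => ENNReal.ofReal (gden p)) := by
  refine Measure.prod_eq fun s t hs ht => ?_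
  rw [withDensity_apply _ (hs.prod ht)]
  have : ∀ᵐ p ∂(volume : Measure (ℝ × ℝ)), True := by simp
  rw [Measure.volume_eq_prod, ← Measure.prod_restrict]
  calc ∫⁻ p, ENNReal.ofReal (gden p) ∂((volume.restrict s).prod (volume.restrict t))
      = ∫⁻ p, gaussianPDF 0 1 p.1 * gaussianPDF 0 1 p.2
          ∂((volume.restrict s).prod (volume.restrict t)) := by
        simp_rw [gden_eq]
    _ = (∫⁻ x in s, gaussianPDF 0 1 x) * ∫⁻ y in t, gaussianPDF 0 1 y :=
        lintegral_prod_mul (measurable_gaussianPDF 0 1).aemeasurable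
          (measurable_gaussianPDF 0 1).aemeasurable
    _ = _ := by
        rw [gaussianReal_of_var_ne_zero 0 one_ne_zero, withDensity_apply _ hs,
          withDensity_apply _ ht]



noncomputable def Rmap (p : ℝ × ℝ) : ℝ × ℝ := ((p.1 - p.2) / √2, (p.1 + p.2) / √2)
noncomputable def Rinv (q : ℝ × ℝ) : ℝ × ℝ := ((q.1 + q.2) / √2, (q.2 - q.1) / √2)

lemma sqrt2_pos : (0:ℝ) < √2 := by positivity
lemma sqrt2_sq : (√2:ℝ) * √2 = 2 := Real.mul_self_sqrt (by norm_num)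

lemma Rinv_Rmap (p : ℝ × ℝ) : Rinv (Rmap p) = p := by
  have h := sqrt2_sq
  have h0 := sqrt2_pos.ne'
  unfold Rmap Rinv
  simp only [Rmap, Rinv, Prod.ext_iff]
  constructor
  · field_simp; rw [Real.sq_sqrt (by norm_num : (0:ℝ) ≤ 2)]; ring
  · field_simp; rw [Real.sq_sqrt (by norm_num : (0:ℝ) ≤ 2)]; ring

lemma Rmap_Rinv (q : ℝ × ℝ) : Rmap (Rinv q) = q := by
  have h := sqrt2_sq
  have h0 := sqrt2_pos.ne'
  simp only [Rmap, Rinv, Prod.ext_iff]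
  constructor
  · field_simp
    rw [Real.sq_sqrt (by norm_num : (0:ℝ) ≤ 2)]
    ring
  · field_simp
    rw [Real.sq_sqrt (by norm_num : (0:ℝ) ≤ 2)]
    ring

lemma Rmap_measurable : Measurable Rmap :=
  ((measurable_fst.sub measurable_snd).div_const _).prodMk
    ((measurable_fst.add measurable_snd).div_const _)

lemma gden_Rinv (q : ℝ × ℝ) : gden (Rinv q) = gden q := by
  have h := sqrt2_sq
  have h0 := sqrt2_pos.ne'
  unfold gden Rinv
  congr 2
  simp only
  field_simp
  ring_nf
  rw [Real.sq_sqrt (by norm_num : (0:ℝ) ≤ 2)]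

noncomputable def Bclm : (ℝ × ℝ) →L[ℝ] (ℝ × ℝ) :=
  LinearMap.toContinuousLinearMap (Matrix.toLin (Module.Basis.finTwoProd ℝ) (Module.Basis.finTwoProd ℝ)
    !![(√2)⁻¹, (√2)⁻¹; -(√2)⁻¹, (√2)⁻¹])

lemma Bclm_apply (q : ℝ × ℝ) : Bclm q = Rinv q := by
  rw [Bclm, Matrix.toLin_finTwoProd_toContinuousLinearMap]
  have h0 := sqrt2_pos.ne'
  unfold Rinv
  simp only [ContinuousLinearMap.prod_apply, ContinuousLinearMap.add_apply,
    ContinuousLinearMap.coe_smul', Pi.smul_apply, ContinuousLinearMap.coe_fst',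
    ContinuousLinearMap.coe_snd', smul_eq_mul, ContinuousLinearMap.neg_apply]
  simp only [Prod.mk.injEq]
  constructor <;> ring

lemma Bclm_det : (Bclm : (ℝ × ℝ) →L[ℝ] (ℝ × ℝ)).det = 1 := by
  rw [Bclm]
  rw [ContinuousLinearMap.det, LinearMap.coe_toContinuousLinearMap, LinearMap.det_toLin,
    Matrix.det_fin_two_of]
  have h := sqrt2_sq
  have h0 := sqrt2_pos.ne'
  field_simp
  rw [Real.sq_sqrt (by norm_num : (0:ℝ) ≤ 2)]; norm_num

lemma hasFDerivAt_Rinv (x : ℝ × ℝ) : HasFDerivAt Rinv Bclm x :=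
  (funext Bclm_apply : ⇑Bclm = Rinv) ▸ Bclm.hasFDerivAt

lemma rot_invariant :
    (volume.withDensity (fun p => ENNReal.ofReal (gden p))).map Rmap
      = volume.withDensity (fun p => ENNReal.ofReal (gden p)) := by
  have hgm : Measurable fun p : ℝ × ℝ => ENNReal.ofReal (gden p) := by
    apply Measurable.ennreal_ofReal
    unfold gden
    fun_prop
  ext s hs
  rw [Measure.map_apply Rmap_measurable hs, withDensity_apply _ (Rmap_measurable hs),
    withDensity_apply _ hs]
  have himg : Rmap ⁻¹' s = Rinv '' s := by
    ext q
    constructor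
    · intro hq
      exact ⟨Rmap q, hq, Rinv_Rmap q⟩
    · rintro ⟨y, hy, rfl⟩
      simpa [Set.mem_preimage, Rmap_Rinv] using hy
  rw [himg]
  have hinj : Set.InjOn Rinv s := fun a _ b _ hab => by
    have := congrArg Rmap hab
    rwa [Rmap_Rinv, Rmap_Rinv] at this
  rw [lintegral_image_eq_lintegral_abs_det_fderiv_mul volume hs
    (fun x _ => (hasFDerivAt_Rinv x).hasFDerivWithinAt) hinj]
  refine setLIntegral_congr_fun hs (fun x _ => ?_)
  rw [Bclm_det, gden_Rinv]
  simp


lemma integral_r_exp : ∫ r in Ioi (0:ℝ), r * Real.exp (-r ^ 2 / 2) = 1 := by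
  have hderiv : ∀ x ∈ Ici (0:ℝ), HasDerivAt (fun r : ℝ => -Real.exp (-r ^ 2 / 2))
      (x * Real.exp (-x ^ 2 / 2)) x := by
    intro x _
    have h1 : HasDerivAt (fun r : ℝ => -r ^ 2 / 2) (-x) x := by
      have := ((hasDerivAt_pow 2 x).neg).div_const 2
      exact this.congr_deriv (by norm_num; ring)
    have := (h1.exp).neg
    exact this.congr_deriv (by ring)
  have hpos : ∀ x ∈ Ioi (0:ℝ), 0 ≤ x * Real.exp (-x ^ 2 / 2) := by
    intro x hx
    have : (0:ℝ) < x := hx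
    positivity
  have htend : Filter.Tendsto (fun r : ℝ => -Real.exp (-r ^ 2 / 2)) Filter.atTop (nhds 0) := by
    rw [← neg_zero]
    apply Filter.Tendsto.neg
    apply Real.tendsto_exp_atBot.comp
    apply Filter.Tendsto.atBot_div_const two_pos
    exact Filter.tendsto_neg_atBot_iff.mpr (Filter.tendsto_pow_atTop two_ne_zero)
  have := integral_Ioi_of_hasDerivAt_of_nonneg' hderiv hpos htend
  rw [this]
  norm_num


lemma gden_integrable : Integrable gden (volume : Measure (ℝ × ℝ)) := by
  have h1 : Integrable (fun x : ℝ => (2 * π)⁻¹ * Real.exp (-(1/2) * x ^ 2)) volume :=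
    (integrable_exp_neg_mul_sq (by norm_num : (0:ℝ) < 1/2)).const_mul _
  have h2 : Integrable (fun x : ℝ => Real.exp (-(1/2) * x ^ 2)) volume :=
    integrable_exp_neg_mul_sq (by norm_num)
  have h3 := h1.mul_prod h2
  rw [← Measure.volume_eq_prod] at h3
  have hfun : gden = fun p : ℝ × ℝ =>
      ((2 * π)⁻¹ * Real.exp (-(1/2) * p.1 ^ 2)) * Real.exp (-(1/2) * p.2 ^ 2) := by
    funext p
    unfold gden
    rw [mul_assoc, ← Real.exp_add]
    congr 1
    ring
  rw [hfun]
  exact h3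

lemma cone_meas {α β : ℝ} (hα : -π < α) (hβ : β < π) (hαβ : α ≤ β) {S : Set (ℝ × ℝ)}
    (hS : MeasurableSet S)
    (hiff : ∀ r θ : ℝ, 0 < r → θ ∈ Ioo (-π) π →
      ((r * Real.cos θ, r * Real.sin θ) ∈ S ↔ θ ∈ Ioo α β)) :
    volume.withDensity (fun p => ENNReal.ofReal (gden p)) S
      = ENNReal.ofReal ((β - α) / (2 * π)) := by
  rw [withDensity_apply _ hS]
  rw [← ofReal_integral_eq_lintegral_ofReal gden_integrable.integrableOn
    (ae_of_all _ fun p => gden_nonneg p)]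
  congr 1
  rw [← integral_indicator hS, ← integral_comp_polarCoord_symm (S.indicator gden)]
  have hcong : ∀ p ∈ (Ioi (0:ℝ) ×ˢ Ioo (-π) π),
      p.1 • (S.indicator gden) (polarCoord.symm p)
        = ((2 * π)⁻¹ * (p.1 * Real.exp (-p.1 ^ 2 / 2)))
            * (Ioo α β).indicator (fun _ => (1:ℝ)) p.2 := by
    rintro ⟨r, θ⟩ ⟨hr, hθ⟩
    simp only [polarCoord_symm_apply]
    have hmem := hiff r θ hr hθ
    by_cases hb : θ ∈ Ioo α β
    · rw [Set.indicator_of_mem (hmem.mpr hb), Set.indicator_of_mem hb]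
      unfold gden
      simp only [smul_eq_mul]
      have hsq : (r * Real.cos θ) ^ 2 + (r * Real.sin θ) ^ 2 = r ^ 2 := by
        have := Real.sin_sq_add_cos_sq θ
        nlinarith [this]
      rw [hsq]
      ring
    · rw [Set.indicator_of_notMem (fun hmm => hb (hmem.mp hmm)),
        Set.indicator_of_notMem hb]
      simp
  rw [show polarCoord.target = Ioi (0:ℝ) ×ˢ Ioo (-π) π from rfl]
  rw [setIntegral_congr_fun (measurableSet_Ioi.prod measurableSet_Ioo) hcong]
  rw [Measure.volume_eq_prod,
    setIntegral_prod_mul (fun x : ℝ => (2 * π)⁻¹ * (x * Real.exp (-x ^ 2 / 2)))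
      (fun y : ℝ => (Ioo α β).indicator (fun _ => (1:ℝ)) y) (Ioi 0) (Ioo (-π) π)]
  rw [integral_const_mul, integral_r_exp]
  rw [setIntegral_indicator measurableSet_Ioo]
  have hsub : Ioo (-π) π ∩ Ioo α β = Ioo α β := by
    apply Set.inter_eq_right.mpr
    intro x hx
    exact ⟨by linarith [hx.1], by linarith [hx.2]⟩
  rw [hsub]
  simp only [integral_const, smul_eq_mul, mul_one, measureReal_def, Measure.restrict_apply MeasurableSet.univ,
    Set.univ_inter]
  rw [Real.volume_Ioo, ENNReal.toReal_ofReal (by linarith)]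
  field_simp



lemma map_sub_gauss :
    ((gaussianReal 0 1).prod (gaussianReal 0 1)).map (fun p : ℝ × ℝ => p.1 - p.2)
      = (gaussianReal 0 1).map (fun x => √2 * x) := by
  have h0 : (√2:ℝ) ≠ 0 := by positivity
  have hcomp : (fun p : ℝ × ℝ => p.1 - p.2)
      = (fun x => √2 * x) ∘ (Prod.fst : ℝ × ℝ → ℝ) ∘ Rmap := by
    funext p
    simp only [Function.comp_apply, Rmap]
    field_simp
  rw [hcomp, ← Function.comp_assoc]
  rw [← Measure.map_map (by fun_prop) Rmap_measurable]
  rw [prod_gauss_eq, rot_invariant, ← prod_gauss_eq]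
  rw [← Measure.map_map (by fun_prop) measurable_fst]
  rw [Measure.map_fst_prod]
  simp

lemma map_neg_sqrt2 :
    ((gaussianReal 0 1).map (fun x => √2 * x)).map (fun x : ℝ => -x)
      = (gaussianReal 0 1).map (fun x => √2 * x) := by
  rw [Measure.map_map (by fun_prop) (by fun_prop)]
  have : ((fun x : ℝ => -x) ∘ fun x => √2 * x) = fun x => (-√2) * x := by
    funext x; simp
  rw [this, gaussianReal_map_const_mul, gaussianReal_map_const_mul]
  norm_num

lemma gauss_neg : (gaussianReal 0 1).map (fun x : ℝ => -x) = gaussianReal 0 1 := by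
  have h : (fun x : ℝ => -x) = fun x : ℝ => (-1 : ℝ) * x := by funext x; ring
  rw [h, gaussianReal_map_const_mul]
  norm_num


lemma coneA_iff {φ : ℝ} (hφ1 : -(π/2) ≤ φ) (hφ2 : φ ≤ π/2) (r θ : ℝ) (hr : 0 < r)
    (hθ : θ ∈ Ioo (-π) π) :
    ((0 < r * Real.cos θ ∧
      0 < Real.sin φ * (r * Real.cos θ) + Real.cos φ * (r * Real.sin θ))
        ↔ θ ∈ Ioo (-φ) (π/2)) := by
  have hπ := Real.pi_pos
  have h1 : 0 < r * Real.cos θ ↔ 0 < Real.cos θ := by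
    constructor
    · intro h
      by_contra hc
      push_neg at hc
      nlinarith
    · exact fun h => mul_pos hr h
  have h2 : Real.sin φ * (r * Real.cos θ) + Real.cos φ * (r * Real.sin θ)
      = r * Real.sin (φ + θ) := by
    rw [Real.sin_add]; ring
  have h3 : 0 < r * Real.sin (φ + θ) ↔ 0 < Real.sin (φ + θ) := by
    constructor
    · intro h
      by_contra hc
      push_neg at hc
      nlinarith
    · exact fun h => mul_pos hr h
  rw [h1, h2, h3]
  constructor
  · rintro ⟨hcos, hsin⟩
    have hθ2 : θ ∈ Ioo (-(π/2)) (π/2) := by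
      constructor
      · by_contra hc
        push_neg at hc
        have : Real.cos θ ≤ 0 := by
          rw [← Real.cos_neg]
          exact Real.cos_nonpos_of_pi_div_two_le_of_le (by linarith) (by linarith [hθ.1])
        linarith
      · by_contra hc
        push_neg at hc
        have : Real.cos θ ≤ 0 :=
          Real.cos_nonpos_of_pi_div_two_le_of_le hc (by linarith [hθ.2])
        linarith
    refine ⟨?_, hθ2.2⟩
    by_contra hc
    push_neg at hc
    have : Real.sin (φ + θ) ≤ 0 :=
      Real.sin_nonpos_of_nonpos_of_neg_pi_le (by linarith) (by linarith [hθ2.1])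
    linarith
  · rintro ⟨hl, hu⟩
    have hc : 0 < Real.cos θ := Real.cos_pos_of_mem_Ioo ⟨by linarith, hu⟩
    exact ⟨hc, Real.sin_pos_of_pos_of_lt_pi (by linarith) (by linarith)⟩

lemma coneC_iff {φ : ℝ} (hφ1 : -(π/2) ≤ φ) (hφ2 : φ ≤ π/2) (r θ : ℝ) (hr : 0 < r)
    (hθ : θ ∈ Ioo (-π) π) :
    ((0 < r * Real.cos θ ∧
      Real.sin φ * (r * Real.cos θ) + Real.cos φ * (r * Real.sin θ) < 0)
        ↔ θ ∈ Ioo (-(π/2)) (-φ)) := by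
  have hπ := Real.pi_pos
  have h1 : 0 < r * Real.cos θ ↔ 0 < Real.cos θ := by
    constructor
    · intro h
      by_contra hc
      push_neg at hc
      nlinarith
    · exact fun h => mul_pos hr h
  have h2 : Real.sin φ * (r * Real.cos θ) + Real.cos φ * (r * Real.sin θ)
      = r * Real.sin (φ + θ) := by
    rw [Real.sin_add]; ring
  have h3 : r * Real.sin (φ + θ) < 0 ↔ Real.sin (φ + θ) < 0 := by
    constructor
    · intro h
      by_contra hc
      push_neg at hc
      nlinarith
    · intro h; nlinarith
  rw [h1, h2, h3]
  constructor
  · rintro ⟨hcos, hsin⟩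
    have hθ2 : θ ∈ Ioo (-(π/2)) (π/2) := by
      constructor
      · by_contra hc
        push_neg at hc
        have : Real.cos θ ≤ 0 := by
          rw [← Real.cos_neg]
          exact Real.cos_nonpos_of_pi_div_two_le_of_le (by linarith) (by linarith [hθ.1])
        linarith
      · by_contra hc
        push_neg at hc
        have : Real.cos θ ≤ 0 :=
          Real.cos_nonpos_of_pi_div_two_le_of_le hc (by linarith [hθ.2])
        linarith
    refine ⟨hθ2.1, ?_⟩
    by_contra hc
    push_neg at hc
    have : 0 ≤ Real.sin (φ + θ) :=
      Real.sin_nonneg_of_nonneg_of_le_pi (by linarith) (by linarith [hθ2.2])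
    linarith
  · rintro ⟨hl, hu⟩
    have hc : 0 < Real.cos θ := Real.cos_pos_of_mem_Ioo ⟨hl, by linarith⟩
    exact ⟨hc, Real.sin_neg_of_neg_of_neg_pi_lt (by linarith) (by linarith)⟩

lemma sign_mul_sign (a b : ℝ) :
    Real.sign a * Real.sign b =
      (if 0 < a ∧ 0 < b then (1:ℝ) else 0) + (if a < 0 ∧ b < 0 then (1:ℝ) else 0)
        - (if 0 < a ∧ b < 0 then (1:ℝ) else 0) - (if a < 0 ∧ 0 < b then (1:ℝ) else 0) := by
  rcases lt_trichotomy a 0 with ha | ha | ha <;>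
    rcases lt_trichotomy b 0 with hb | hb | hb <;>
      simp [Real.sign_of_pos, Real.sign_of_neg, Real.sign_zero, ha, hb, not_lt_of_gt,
        lt_irrefl, lt_asymm] <;> norm_num

set_option maxHeartbeats 2000000 in
/-- Kendall's orthant-probability identity for the bivariate Normal. Represent
two i.i.d. copies `(X₁,Y₁), (X₂,Y₂)` of a centered unit-variance Gaussian pair
with correlation `ρ` via four i.i.d. standard normals `Z 0, …, Z 3`:
`Xⱼ = Z (2j)`, `Yⱼ = ρ·Z (2j) + √(1-ρ²)·Z (2j+1)`. Then
`P(X₁ > X₂ ∧ Y₁ > Y₂) = 1/4 + arcsin ρ / (2π)`, and Kendall's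
`τ = E[sign(X₁-X₂)·sign(Y₁-Y₂)] = (2/π)·arcsin ρ`. -/

theorem stmt17 {Ω : Type*} [MeasurableSpace Ω] (μ : Measure Ω)
    [IsProbabilityMeasure μ] (ρ : ℝ) (hρ : -1 ≤ ρ ∧ ρ ≤ 1)
    (Z : Fin 4 → Ω → ℝ)
    (hmeas : ∀ i, Measurable (Z i))
    (hindep : iIndepFun Z μ)
    (hlaw : ∀ i, Measure.map (Z i) μ = gaussianReal 0 1)
    (X₁ Y₁ X₂ Y₂ : Ω → ℝ)
    (hX₁ : X₁ = Z 0) (hY₁ : Y₁ = fun ω => ρ * Z 0 ω + Real.sqrt (1 - ρ ^ 2) * Z 1 ω)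
    (hX₂ : X₂ = Z 2) (hY₂ : Y₂ = fun ω => ρ * Z 2 ω + Real.sqrt (1 - ρ ^ 2) * Z 3 ω) :
    μ {ω | X₂ ω < X₁ ω ∧ Y₂ ω < Y₁ ω} =
      ENNReal.ofReal (1 / 4 + arcsin ρ / (2 * π)) ∧
    ∫ ω, Real.sign (X₁ ω - X₂ ω) * Real.sign (Y₁ ω - Y₂ ω) ∂μ =
      (2 / π) * arcsin ρ := by
  obtain ⟨hρ1, hρ2⟩ := hρ
  have hπ := Real.pi_pos
  set φ := Real.arcsin ρ with hφdef
  have hφ1 : -(π/2) ≤ φ := Real.neg_pi_div_two_le_arcsin ρ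
  have hφ2 : φ ≤ π/2 := Real.arcsin_le_pi_div_two ρ
  have hsinφ : Real.sin φ = ρ := Real.sin_arcsin hρ1 hρ2
  have hcosφ : Real.cos φ = Real.sqrt (1 - ρ ^ 2) := Real.cos_arcsin ρ
  set U : Ω → ℝ := fun ω => Z 0 ω - Z 2 ω with hU
  set V : Ω → ℝ := fun ω => Z 1 ω - Z 3 ω with hV
  have hUm : Measurable U := (hmeas 0).sub (hmeas 2)
  have hVm : Measurable V := (hmeas 1).sub (hmeas 3)
  set pair : Ω → ℝ × ℝ := fun ω => (U ω, V ω) with hpairdef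
  have hpairm : Measurable pair := hUm.prodMk hVm
  have hUV : IndepFun U V μ := by
    have h := hindep.indepFun_prodMk_prodMk hmeas 0 2 1 3
      (by decide) (by decide) (by decide) (by decide)
    exact h.comp (measurable_fst.sub measurable_snd) (measurable_fst.sub measurable_snd)
  have hmapPair : μ.map pair = (μ.map U).prod (μ.map V) :=
    (indepFun_iff_map_prod_eq_prod_map_map hUm.aemeasurable hVm.aemeasurable).mp hUV
  have hlawsub : ∀ i j : Fin 4, i ≠ j →
      μ.map (fun ω => Z i ω - Z j ω) = (gaussianReal 0 1).map (fun x => √2 * x) := by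
    intro i j hij
    have hZij : IndepFun (Z i) (Z j) μ := hindep.indepFun hij
    have hpij : μ.map (fun ω => (Z i ω, Z j ω))
        = (gaussianReal 0 1).prod (gaussianReal 0 1) := by
      have h := (indepFun_iff_map_prod_eq_prod_map_map (hmeas i).aemeasurable
        (hmeas j).aemeasurable).mp hZij
      rw [h, hlaw i, hlaw j]
    have hcomp : (fun ω => Z i ω - Z j ω)
        = (fun p : ℝ × ℝ => p.1 - p.2) ∘ (fun ω => (Z i ω, Z j ω)) := rfl
    rw [hcomp, ← Measure.map_map (show Measurable (fun p : ℝ × ℝ => p.1 - p.2) from measurable_fst.sub measurable_snd)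
      ((hmeas i).prodMk (hmeas j)), hpij, map_sub_gauss]
  have hlawU : μ.map U = (gaussianReal 0 1).map (fun x => √2 * x) :=
    hlawsub 0 2 (by decide)
  have hlawV : μ.map V = (gaussianReal 0 1).map (fun x => √2 * x) :=
    hlawsub 1 3 (by decide)
  have hs2 : (0:ℝ) < √2 := sqrt2_pos
  have hm : Measurable (fun x : ℝ => √2 * x) := by fun_prop
  have hlawUV : μ.map pair
      = (((gaussianReal 0 1).prod (gaussianReal 0 1)).map
          (Prod.map (fun x : ℝ => √2 * x) (fun x : ℝ => √2 * x))) := by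
    rw [hmapPair, hlawU, hlawV, Measure.map_prod_map _ _ hm hm]
  set coneA : Set (ℝ × ℝ) := {p | 0 < p.1 ∧ 0 < Real.sin φ * p.1 + Real.cos φ * p.2}
    with hconeA
  set coneB : Set (ℝ × ℝ) := {p | p.1 < 0 ∧ Real.sin φ * p.1 + Real.cos φ * p.2 < 0}
    with hconeB
  set coneC : Set (ℝ × ℝ) := {p | 0 < p.1 ∧ Real.sin φ * p.1 + Real.cos φ * p.2 < 0}
    with hconeC
  set coneD : Set (ℝ × ℝ) := {p | p.1 < 0 ∧ 0 < Real.sin φ * p.1 + Real.cos φ * p.2}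
    with hconeD
  have hlin : Measurable fun p : ℝ × ℝ => Real.sin φ * p.1 + Real.cos φ * p.2 :=
    (measurable_fst.const_mul _).add (measurable_snd.const_mul _)
  have hAmeas : MeasurableSet coneA :=
    (measurableSet_lt measurable_const measurable_fst).inter
      (measurableSet_lt measurable_const hlin)
  have hBmeas : MeasurableSet coneB :=
    (measurableSet_lt measurable_fst measurable_const).inter
      (measurableSet_lt hlin measurable_const)
  have hCmeas : MeasurableSet coneC :=
    (measurableSet_lt measurable_const measurable_fst).inter
      (measurableSet_lt hlin measurable_const)
  have hDmeas : MeasurableSet coneD :=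
    (measurableSet_lt measurable_fst measurable_const).inter
      (measurableSet_lt measurable_const hlin)
  -- dilation invariance of the four cones
  have hdil : ∀ (c₁ c₂ : ℝ), (c₁ < 0 → False) → True := fun _ _ _ => trivial
  have hdilA : (Prod.map (fun x : ℝ => √2 * x) (fun x : ℝ => √2 * x)) ⁻¹' coneA
      = coneA := by
    ext p
    simp only [Set.mem_preimage, Prod.map_fst, Prod.map_snd, hconeA, Set.mem_setOf_eq]
    constructor
    · rintro ⟨h1, h2⟩
      exact ⟨by nlinarith, by nlinarith⟩
    · rintro ⟨h1, h2⟩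
      exact ⟨by nlinarith, by nlinarith⟩
  have hdilB : (Prod.map (fun x : ℝ => √2 * x) (fun x : ℝ => √2 * x)) ⁻¹' coneB
      = coneB := by
    ext p
    simp only [Set.mem_preimage, Prod.map_fst, Prod.map_snd, hconeB, Set.mem_setOf_eq]
    constructor
    · rintro ⟨h1, h2⟩
      exact ⟨by nlinarith, by nlinarith⟩
    · rintro ⟨h1, h2⟩
      exact ⟨by nlinarith, by nlinarith⟩
  have hdilC : (Prod.map (fun x : ℝ => √2 * x) (fun x : ℝ => √2 * x)) ⁻¹' coneC
      = coneC := by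
    ext p
    simp only [Set.mem_preimage, Prod.map_fst, Prod.map_snd, hconeC, Set.mem_setOf_eq]
    constructor
    · rintro ⟨h1, h2⟩
      exact ⟨by nlinarith, by nlinarith⟩
    · rintro ⟨h1, h2⟩
      exact ⟨by nlinarith, by nlinarith⟩
  have hdilD : (Prod.map (fun x : ℝ => √2 * x) (fun x : ℝ => √2 * x)) ⁻¹' coneD
      = coneD := by
    ext p
    simp only [Set.mem_preimage, Prod.map_fst, Prod.map_snd, hconeD, Set.mem_setOf_eq]
    constructor
    · rintro ⟨h1, h2⟩
      exact ⟨by nlinarith, by nlinarith⟩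
    · rintro ⟨h1, h2⟩
      exact ⟨by nlinarith, by nlinarith⟩
  -- reduce probabilities to the gaussian density measure
  have hμcone : ∀ S : Set (ℝ × ℝ), MeasurableSet S →
      (Prod.map (fun x : ℝ => √2 * x) (fun x : ℝ => √2 * x)) ⁻¹' S = S →
      μ (pair ⁻¹' S) = volume.withDensity (fun p => ENNReal.ofReal (gden p)) S := by
    intro S hSm hSdil
    rw [← Measure.map_apply hpairm hSm, hlawUV,
      Measure.map_apply (hm.prodMap hm) hSm, hSdil, prod_gauss_eq]
  -- values of the cone measures
  have hvalA : volume.withDensity (fun p => ENNReal.ofReal (gden p)) coneA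
      = ENNReal.ofReal ((π/2 - -φ) / (2 * π)) := by
    refine cone_meas (by linarith) (by linarith) (by linarith) hAmeas ?_
    intro r θ hr hθ
    simp only [hconeA, Set.mem_setOf_eq]
    exact coneA_iff hφ1 hφ2 r θ hr hθ
  have hvalC : volume.withDensity (fun p => ENNReal.ofReal (gden p)) coneC
      = ENNReal.ofReal ((-φ - -(π/2)) / (2 * π)) := by
    refine cone_meas (by linarith) (by linarith) (by linarith) hCmeas ?_
    intro r θ hr hθ
    simp only [hconeC, Set.mem_setOf_eq]
    exact coneC_iff hφ1 hφ2 r θ hr hθ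
  -- negation symmetry
  have hnegmeas : Measurable fun p : ℝ × ℝ => (-p.1, -p.2) :=
    measurable_fst.neg.prodMk measurable_snd.neg
  have hG2neg : (volume.withDensity (fun p => ENNReal.ofReal (gden p))).map
      (fun p : ℝ × ℝ => (-p.1, -p.2))
      = volume.withDensity (fun p => ENNReal.ofReal (gden p)) := by
    rw [← prod_gauss_eq]
    have h : (fun p : ℝ × ℝ => (-p.1, -p.2))
        = Prod.map (fun x : ℝ => -x) (fun x : ℝ => -x) := rfl
    rw [h, ← Measure.map_prod_map _ _ (by fun_prop) (by fun_prop), gauss_neg]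
  have hnegA : (fun p : ℝ × ℝ => (-p.1, -p.2)) ⁻¹' coneA = coneB := by
    ext p
    simp only [Set.mem_preimage, hconeA, hconeB, Set.mem_setOf_eq, mul_neg, neg_add_rev]
    constructor
    · rintro ⟨h1, h2⟩
      exact ⟨by linarith, by nlinarith⟩
    · rintro ⟨h1, h2⟩
      exact ⟨by linarith, by nlinarith⟩
  have hnegC : (fun p : ℝ × ℝ => (-p.1, -p.2)) ⁻¹' coneC = coneD := by
    ext p
    simp only [Set.mem_preimage, hconeC, hconeD, Set.mem_setOf_eq, mul_neg, neg_add_rev]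
    constructor
    · rintro ⟨h1, h2⟩
      exact ⟨by linarith, by nlinarith⟩
    · rintro ⟨h1, h2⟩
      exact ⟨by linarith, by nlinarith⟩
  have hvalB : volume.withDensity (fun p => ENNReal.ofReal (gden p)) coneB
      = ENNReal.ofReal ((π/2 - -φ) / (2 * π)) := by
    rw [← hnegA, ← Measure.map_apply hnegmeas hAmeas, hG2neg, hvalA]
  have hvalD : volume.withDensity (fun p => ENNReal.ofReal (gden p)) coneD
      = ENNReal.ofReal ((-φ - -(π/2)) / (2 * π)) := by
    rw [← hnegC, ← Measure.map_apply hnegmeas hCmeas, hG2neg, hvalC]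
  -- event identification
  have hev : {ω | X₂ ω < X₁ ω ∧ Y₂ ω < Y₁ ω} = pair ⁻¹' coneA := by
    ext ω
    rw [Set.mem_setOf_eq, hX₁, hX₂, hY₁, hY₂]
    simp only [Set.mem_preimage, hpairdef, hconeA, Set.mem_setOf_eq, hU, hV,
      hsinφ, hcosφ]
    constructor
    · rintro ⟨h1, h2⟩
      exact ⟨by linarith, by nlinarith⟩
    · rintro ⟨h1, h2⟩
      exact ⟨by linarith, by nlinarith⟩
  have hμA : μ (pair ⁻¹' coneA) = ENNReal.ofReal ((π/2 - -φ) / (2 * π)) := by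
    rw [hμcone coneA hAmeas hdilA, hvalA]
  have hμB : μ (pair ⁻¹' coneB) = ENNReal.ofReal ((π/2 - -φ) / (2 * π)) := by
    rw [hμcone coneB hBmeas hdilB, hvalB]
  have hμC : μ (pair ⁻¹' coneC) = ENNReal.ofReal ((-φ - -(π/2)) / (2 * π)) := by
    rw [hμcone coneC hCmeas hdilC, hvalC]
  have hμD : μ (pair ⁻¹' coneD) = ENNReal.ofReal ((-φ - -(π/2)) / (2 * π)) := by
    rw [hμcone coneD hDmeas hdilD, hvalD]
  have hval1 : (π/2 - -φ) / (2 * π) = 1 / 4 + φ / (2 * π) := by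
    field_simp
    ring
  constructor
  · rw [hev, hμA, hval1]
  · -- the Kendall tau part
    have hSA : MeasurableSet (pair ⁻¹' coneA) := hpairm hAmeas
    have hSB : MeasurableSet (pair ⁻¹' coneB) := hpairm hBmeas
    have hSC : MeasurableSet (pair ⁻¹' coneC) := hpairm hCmeas
    have hSD : MeasurableSet (pair ⁻¹' coneD) := hpairm hDmeas
    have hW : ∀ ω, Y₁ ω - Y₂ ω = Real.sin φ * U ω + Real.cos φ * V ω := by
      intro ω
      rw [hY₁, hY₂, hsinφ, hcosφ, hU, hV]
      ring
    have hXU : ∀ ω, X₁ ω - X₂ ω = U ω := by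
      intro ω
      rw [hX₁, hX₂, hU]
    have hfeq : (fun ω => Real.sign (X₁ ω - X₂ ω) * Real.sign (Y₁ ω - Y₂ ω))
        = fun ω =>
          (pair ⁻¹' coneA).indicator (fun _ => (1:ℝ)) ω
            + (pair ⁻¹' coneB).indicator (fun _ => (1:ℝ)) ω
            - (pair ⁻¹' coneC).indicator (fun _ => (1:ℝ)) ω
            - (pair ⁻¹' coneD).indicator (fun _ => (1:ℝ)) ω := by
      classical
      funext ω
      rw [hW ω, hXU ω]
      have hmemA : (ω ∈ pair ⁻¹' coneA)
          ↔ (0 < U ω ∧ 0 < Real.sin φ * U ω + Real.cos φ * V ω) := Iff.rfl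
      have hmemB : (ω ∈ pair ⁻¹' coneB)
          ↔ (U ω < 0 ∧ Real.sin φ * U ω + Real.cos φ * V ω < 0) := Iff.rfl
      have hmemC : (ω ∈ pair ⁻¹' coneC)
          ↔ (0 < U ω ∧ Real.sin φ * U ω + Real.cos φ * V ω < 0) := Iff.rfl
      have hmemD : (ω ∈ pair ⁻¹' coneD)
          ↔ (U ω < 0 ∧ 0 < Real.sin φ * U ω + Real.cos φ * V ω) := Iff.rfl
      rw [Set.indicator_apply, Set.indicator_apply, Set.indicator_apply,
        Set.indicator_apply]
      simp only [hmemA, hmemB, hmemC, hmemD]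
      exact sign_mul_sign (U ω) (Real.sin φ * U ω + Real.cos φ * V ω)
    rw [hfeq]
    have intA : Integrable ((pair ⁻¹' coneA).indicator (fun _ => (1:ℝ))) μ :=
      (integrable_const (1:ℝ)).indicator hSA
    have intB : Integrable ((pair ⁻¹' coneB).indicator (fun _ => (1:ℝ))) μ :=
      (integrable_const (1:ℝ)).indicator hSB
    have intC : Integrable ((pair ⁻¹' coneC).indicator (fun _ => (1:ℝ))) μ :=
      (integrable_const (1:ℝ)).indicator hSC
    have intD : Integrable ((pair ⁻¹' coneD).indicator (fun _ => (1:ℝ))) μ :=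
      (integrable_const (1:ℝ)).indicator hSD
    have intAB : Integrable (fun ω => (pair ⁻¹' coneA).indicator (fun _ => (1:ℝ)) ω
        + (pair ⁻¹' coneB).indicator (fun _ => (1:ℝ)) ω) μ := intA.add intB
    have intABC : Integrable (fun ω => (pair ⁻¹' coneA).indicator (fun _ => (1:ℝ)) ω
        + (pair ⁻¹' coneB).indicator (fun _ => (1:ℝ)) ω
        - (pair ⁻¹' coneC).indicator (fun _ => (1:ℝ)) ω) μ := intAB.sub intC
    rw [integral_sub intABC intD,
      integral_sub intAB intC, integral_add intA intB,
      integral_indicator_const _ hSA, integral_indicator_const _ hSB,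
      integral_indicator_const _ hSC, integral_indicator_const _ hSD]
    simp only [measureReal_def]
    rw [hμA, hμB, hμC, hμD]
    have hnn1 : (0:ℝ) ≤ (π/2 - -φ) / (2 * π) :=
      div_nonneg (by linarith) (by positivity)
    have hnn2 : (0:ℝ) ≤ (-φ - -(π/2)) / (2 * π) :=
      div_nonneg (by linarith) (by positivity)
    rw [ENNReal.toReal_ofReal hnn1, ENNReal.toReal_ofReal hnn2]
    simp only [smul_eq_mul, mul_one]
    field_simp
    ring
end
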